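/- arXiv:1706.01359 — 4 statements merged into one kernel-verified Lean document; each statement's English description precedes it below -/
import Mathlib

section
/- Let 0 → F → G → H → 0 be a short exact sequence of locally free sheaves of O_X-modules with H invertible (of rank 1). Then there is a short exact sequence 0 → ∧²F → ∧²G → F ⊗ H → 0, where the surjection ∧²G → F ⊗ H is induced by g₁ ∧ g₂ ↦ π(g₁) ⊗ g₂ − π(g₂) ⊗ g₁ (identifying H ⊗ F ≅ F ⊗ H and using that π(f) = 0 for f in the image of F). -/
/-!
Since `H` is projective the sequence splits, `G ≅ F ⊕ H`, so that
`⋀²G ≅ ⋀²F ⊕ (F ⊗ H) ⊕ ⋀²H`, and the map `⋀²G → F ⊗ H` is the projection to the middle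
summand. The last summand vanishes because `H` is invertible: for `ψ ∈ Hᵛ` one has
`ψ x • y = ψ y • x` (as `x ⊗ y = y ⊗ x` in `H ⊗ H`), so `ψ x ^ 2 • B a b = ψ a • ψ b • B x x = 0`
for every alternating bilinear `B` on `H`, and the squares `ψ x ^ 2` generate the unit ideal.
The symmetry of `H ⊗ H` also gives the formula for the projection after applying `ι ⊗ id`.
-/

open TensorProduct

section

variable {R F G H : Type*} [CommRing R] [AddCommGroup F] [Module R F] [AddCommGroup G]
  [Module R G] [AddCommGroup H] [Module R H]

namespace Module.Invertible

variable [Module.Invertible R H]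

theorem dual_smul_comm (ψ : Module.Dual R H) (x y : H) : ψ x • y = ψ y • x := by
  simpa using congr(TensorProduct.lift ((LinearMap.lsmul R H).compl₁₂ ψ LinearMap.id)
    $(tmul_comm (R := R) (m₁ := x) (m₂ := y)))

theorem span_dual_apply_eq_top :
    Ideal.span {c : R | ∃ (ψ : Module.Dual R H) (x : H), ψ x = c} = ⊤ := by
  suffices ∀ t, contractLeft R H t ∈
      Ideal.span {c : R | ∃ (ψ : Module.Dual R H) (x : H), ψ x = c} by
    obtain ⟨t, ht⟩ := (Module.Invertible.bijective (R := R) (M := H)).2 1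
    exact (Ideal.eq_top_iff_one _).2 (ht ▸ this t)
  intro t
  induction t using TensorProduct.induction_on with
  | zero => simp
  | tmul ψ x => exact Ideal.subset_span ⟨ψ, x, rfl⟩
  | add t u ht hu => rw [map_add]; exact add_mem ht hu

theorem bilinear_eq_zero_of_apply_self {P : Type*} [AddCommGroup P] [Module R P]
    (B : H →ₗ[R] H →ₗ[R] P) (hB : ∀ x, B x x = 0) : B = 0 := by
  ext a b
  suffices Ideal.span ((· ^ 2) '' {c : R | ∃ (ψ : Module.Dual R H) (x : H), ψ x = c}) ≤
      Ideal.torsionOf R P (B a b) by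
    rw [Ideal.span_pow_eq_top _ span_dual_apply_eq_top, top_le_iff,
      Ideal.torsionOf_eq_top_iff] at this
    simpa using this
  rw [Ideal.span_le]
  rintro _ ⟨_, ⟨ψ, x, rfl⟩, rfl⟩
  calc (ψ x ^ 2) • B a b = B (ψ x • a) (ψ x • b) := by simp [pow_two, mul_smul]
    _ = 0 := by simp [dual_smul_comm ψ x, hB]

end Module.Invertible

theorem ExteriorAlgebra.ι_mul_ι_eq_zero_of_invertible [Module.Invertible R H] (t : H →ₗ[R] G)
    (a b : H) : ι R (t a) * ι R (t b) = 0 := by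
  have := Module.Invertible.bilinear_eq_zero_of_apply_self
    ((LinearMap.mul R (ExteriorAlgebra R G)).compl₁₂ (ι R ∘ₗ t) (ι R ∘ₗ t)) fun x ↦ by simp
  simpa using congr($this a b)

theorem Function.Exact.exists_retraction_add_eq_id {ι : F →ₗ[R] G} {π : G →ₗ[R] H}
    (h : Function.Exact ι π) (hι : Function.Injective ι) {s : H →ₗ[R] G}
    (hs : π ∘ₗ s = LinearMap.id) :
    ∃ r : G →ₗ[R] F, r ∘ₗ ι = LinearMap.id ∧ r ∘ₗ s = 0 ∧ ι ∘ₗ r + s ∘ₗ π = LinearMap.id := by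
  let e : G ≃ₗ[R] F × H := (h.splitSurjectiveEquiv hι ⟨s, hs⟩).1
  have hse : e.symm ∘ₗ LinearMap.inr R F H = s :=
    congrArg Subtype.val ((h.splitSurjectiveEquiv hι).symm_apply_apply ⟨s, hs⟩)
  obtain ⟨hιe, hπe⟩ : ι = e.symm ∘ₗ LinearMap.inl R F H ∧ π = LinearMap.snd R F H ∘ₗ e :=
    (h.splitSurjectiveEquiv hι ⟨s, hs⟩).2
  clear_value e
  subst hse hιe hπe
  refine ⟨LinearMap.fst R F H ∘ₗ e, ?_, ?_, ?_⟩ <;> ext g <;> simp [← map_add]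

namespace exteriorPower

theorem ιMulti_two_coe (v : Fin 2 → G) :
    (ιMulti R 2 v : ExteriorAlgebra R G) =
      ExteriorAlgebra.ι R (v 0) * ExteriorAlgebra.ι R (v 1) := by
  simp [ExteriorAlgebra.ιMulti_apply, Matrix.vecTail]

theorem restrict_exteriorAlgebraMap_eq_map (f : F →ₗ[R] G) (n : ℕ)
    (hf : ∀ x ∈ ⋀[R]^n F, ExteriorAlgebra.map f x ∈ ⋀[R]^n G) :
    (ExteriorAlgebra.map f).toLinearMap.restrict hf = map n f :=
  linearMap_ext <| AlternatingMap.ext fun v ↦ Subtype.ext <| by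
    simp only [LinearMap.compAlternatingMap_apply, map_apply_ιMulti, ιMulti_apply_coe]
    exact ExteriorAlgebra.map_apply_ιMulti f v

noncomputable def wedgeTwoToTensor (a : G →ₗ[R] F) (b : G →ₗ[R] H) :
    ⋀[R]^2 G →ₗ[R] F ⊗[R] H :=
  alternatingMapLinearEquiv <| AlternatingMap.alternatizeUncurryFin
    { toFun g := ((TensorProduct.mk R F H).flip (b g)).compAlternatingMap
        (AlternatingMap.ofSubsingleton R G F 0 a)
      map_add' _ _ := AlternatingMap.ext fun _ ↦ by simp
      map_smul' _ _ := AlternatingMap.ext fun _ ↦ by simp }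

theorem wedgeTwoToTensor_ιMulti (a : G →ₗ[R] F) (b : G →ₗ[R] H) (v : Fin 2 → G) :
    wedgeTwoToTensor a b (ιMulti R 2 v) = a (v 1) ⊗ₜ b (v 0) - a (v 0) ⊗ₜ b (v 1) := by
  simp [wedgeTwoToTensor, AlternatingMap.alternatizeUncurryFin_apply, Fin.sum_univ_two,
    Fin.removeNth, sub_eq_add_neg]

noncomputable def wedgeOfTensor (ι : F →ₗ[R] G) (s : H →ₗ[R] G) :
    F ⊗[R] H →ₗ[R] ExteriorAlgebra R G :=
  TensorProduct.lift ((LinearMap.mul R (ExteriorAlgebra R G)).compl₁₂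
    (ExteriorAlgebra.ι R ∘ₗ s) (ExteriorAlgebra.ι R ∘ₗ ι)).flip

variable {ι : F →ₗ[R] G} {π : G →ₗ[R] H} {r : G →ₗ[R] F} {s : H →ₗ[R] G}

theorem coe_eq_map_map_add_wedgeOfTensor [Module.Invertible R H]
    (hsplit : ι ∘ₗ r + s ∘ₗ π = LinearMap.id) (w : ⋀[R]^2 G) :
    (w : ExteriorAlgebra R G) =
      map 2 ι (map 2 r w) + wedgeOfTensor ι s (wedgeTwoToTensor r π w) := by
  suffices (⋀[R]^2 G).subtype = (⋀[R]^2 G).subtype ∘ₗ map 2 ι ∘ₗ map 2 r +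
      wedgeOfTensor ι s ∘ₗ wedgeTwoToTensor r π from congr($this w)
  refine linearMap_ext <| AlternatingMap.ext fun v ↦ ?_
  have hv : ∀ i, ExteriorAlgebra.ι R (v i) =
      ExteriorAlgebra.ι R (ι (r (v i))) + ExteriorAlgebra.ι R (s (π (v i))) := fun i ↦ by
    rw [← map_add]; exact congr(ExteriorAlgebra.ι R ($hsplit.symm (v i)))
  have hss := ExteriorAlgebra.ι_mul_ι_eq_zero_of_invertible s (π (v 0)) (π (v 1))
  have hswap := ExteriorAlgebra.ι_add_mul_swap (R := R) (ι (r (v 0))) (s (π (v 1)))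
  simp only [LinearMap.compAlternatingMap_apply, LinearMap.add_apply, LinearMap.comp_apply,
    Submodule.subtype_apply, map_apply_ιMulti, ιMulti_two_coe, wedgeTwoToTensor_ιMulti, map_sub,
    wedgeOfTensor, TensorProduct.lift.tmul, LinearMap.flip_apply, LinearMap.compl₁₂_apply,
    LinearMap.mul_apply', Function.comp_apply]
  rw [hv 0, hv 1, add_mul, mul_add, mul_add, hss, eq_neg_of_add_eq_zero_left hswap]
  abel

theorem range_map_le_ker_wedgeTwoToTensor (hπι : π ∘ₗ ι = 0) :
    LinearMap.range (map 2 ι) ≤ LinearMap.ker (wedgeTwoToTensor r π) := by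
  have hπι' : ∀ f, π (ι f) = 0 := LinearMap.congr_fun hπι
  exact LinearMap.range_le_ker_iff.mpr <| linearMap_ext <| AlternatingMap.ext fun v ↦ by
    simp [wedgeTwoToTensor_ιMulti, hπι']

theorem ker_wedgeTwoToTensor_le_range_map [Module.Invertible R H]
    (hsplit : ι ∘ₗ r + s ∘ₗ π = LinearMap.id) :
    LinearMap.ker (wedgeTwoToTensor r π) ≤ LinearMap.range (map 2 ι) := by
  intro w hw
  have hw' := coe_eq_map_map_add_wedgeOfTensor hsplit w
  rw [LinearMap.mem_ker.mp hw, map_zero, add_zero] at hw'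
  exact ⟨map 2 r w, Subtype.ext hw'.symm⟩

theorem wedgeTwoToTensor_surjective (hr : r ∘ₗ ι = LinearMap.id) (hs : π ∘ₗ s = LinearMap.id)
    (hrs : r ∘ₗ s = 0) (hπι : π ∘ₗ ι = 0) : Function.Surjective (wedgeTwoToTensor r π) := by
  have hr' : ∀ f, r (ι f) = f := LinearMap.congr_fun hr
  have hs' : ∀ h, π (s h) = h := LinearMap.congr_fun hs
  have hrs' : ∀ h, r (s h) = 0 := LinearMap.congr_fun hrs
  have hπι' : ∀ f, π (ι f) = 0 := LinearMap.congr_fun hπι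
  rw [← LinearMap.range_eq_top, eq_top_iff, ← span_tmul_eq_top, Submodule.span_le]
  rintro _ ⟨f, h, rfl⟩
  exact ⟨ιMulti R 2 ![s h, ι f], by simp [wedgeTwoToTensor_ιMulti, hr', hs', hrs', hπι']⟩

theorem map_wedgeTwoToTensor_ιMulti [Module.Invertible R H]
    (hsplit : ι ∘ₗ r + s ∘ₗ π = LinearMap.id) (g₁ g₂ : G) :
    TensorProduct.map ι LinearMap.id (wedgeTwoToTensor r π (ιMulti R 2 ![g₁, g₂])) =
      g₂ ⊗ₜ π g₁ - g₁ ⊗ₜ π g₂ := by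
  have hιr : ∀ g, ι (r g) = g - s (π g) := fun g ↦
    eq_sub_of_add_eq (LinearMap.congr_fun hsplit g)
  have hcomm : s (π g₂) ⊗ₜ[R] π g₁ = s (π g₁) ⊗ₜ π g₂ :=
    congr(TensorProduct.map s LinearMap.id $(Module.Invertible.tmul_comm (R := R)))
  simp only [wedgeTwoToTensor_ιMulti, map_sub, TensorProduct.map_tmul, LinearMap.id_apply, hιr,
    sub_tmul, hcomm, Matrix.cons_val_zero, Matrix.cons_val_one]
  abel

end exteriorPower

end

open ExteriorAlgebra

/-- The formula for `φ` is stated after applying `ι ⊗ id`, where `π g₁ ⊗ g₂ − π g₂ ⊗ g₁`,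
flipped from `H ⊗ G` to `G ⊗ H`, reads `g₂ ⊗ π g₁ − g₁ ⊗ π g₂`. -/
theorem stmt1_general {R F G H : Type*} [CommRing R]
    [AddCommGroup F] [Module R F] [AddCommGroup G] [Module R G]
    [AddCommGroup H] [Module R H]
    (hinv : ∃ (H' : Type) (_ : AddCommGroup H') (_ : Module R H'),
      Nonempty (TensorProduct R H H' ≃ₗ[R] R))
    (ι : F →ₗ[R] G) (π : G →ₗ[R] H)
    (hι : Function.Injective ι) (hπ : Function.Surjective π)
    (hexact : LinearMap.range ι = LinearMap.ker π)
    (hmemG : ∀ v : Fin 2 → G, ιMulti R 2 v ∈ ⋀[R]^2 G)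
    (hmap : ∀ x ∈ ⋀[R]^2 F, ExteriorAlgebra.map ι x ∈ ⋀[R]^2 G) :
    Function.Injective ((ExteriorAlgebra.map ι).toLinearMap.restrict hmap) ∧
    ∃ φ : (⋀[R]^2 G) →ₗ[R] TensorProduct R F H,
      Function.Surjective φ ∧
      LinearMap.range ((ExteriorAlgebra.map ι).toLinearMap.restrict hmap) =
        LinearMap.ker φ ∧
      ∀ g₁ g₂ : G,
        (TensorProduct.map ι LinearMap.id) (φ ⟨ιMulti R 2 ![g₁, g₂], hmemG ![g₁, g₂]⟩) =
          g₂ ⊗ₜ[R] π g₁ - g₁ ⊗ₜ[R] π g₂ := by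
  obtain ⟨H', _, _, ⟨e⟩⟩ := hinv
  have : Module.Invertible R H := .left e
  obtain ⟨s, hs⟩ := Module.projective_lifting_property π LinearMap.id hπ
  have hex : Function.Exact ι π := LinearMap.exact_iff.mpr hexact.symm
  obtain ⟨r, hr, hrs, hsplit⟩ := hex.exists_retraction_add_eq_id hι hs
  rw [exteriorPower.restrict_exteriorAlgebraMap_eq_map]
  exact ⟨exteriorPower.map_injective r hr, exteriorPower.wedgeTwoToTensor r π,
    exteriorPower.wedgeTwoToTensor_surjective hr hs hrs hex.linearMap_comp_eq_zero,
    (exteriorPower.range_map_le_ker_wedgeTwoToTensor hex.linearMap_comp_eq_zero).antisymm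
      (exteriorPower.ker_wedgeTwoToTensor_le_range_map hsplit),
    exteriorPower.map_wedgeTwoToTensor_ιMulti hsplit⟩

/-- Let `0 → F →ι G →π H → 0` be a short exact sequence of locally free
sheaves of `O_X`-modules with `H` invertible (of rank 1).  Then there is a short exact
sequence `0 → ⋀²F → ⋀²G → F ⊗ H → 0`, where the surjection `⋀²G → F ⊗ H` is induced by
`g₁ ∧ g₂ ↦ π g₁ ⊗ g₂ − π g₂ ⊗ g₁` (identifying `H ⊗ F ≅ F ⊗ H` and using `π ∘ ι = 0`).
(Formalised in the local model: finitely generated projective modules over a commutative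
ring, `H` invertible meaning it has a tensor inverse; the compatibility of `φ` with the
formula is expressed after applying `ι ⊗ id : F ⊗ H → G ⊗ H` and the flip `H ⊗ G ≅ G ⊗ H`,
under which `π g₁ ⊗ g₂ − π g₂ ⊗ g₁` corresponds to `g₂ ⊗ π g₁ − g₁ ⊗ π g₂`.) -/
theorem stmt1 {R F G H : Type*} [CommRing R]
    [AddCommGroup F] [Module R F] [AddCommGroup G] [Module R G]
    [AddCommGroup H] [Module R H]
    [Module.Finite R F] [Module.Projective R F]
    [Module.Finite R G] [Module.Projective R G]
    [Module.Finite R H] [Module.Projective R H]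
    (hinv : ∃ (H' : Type) (_ : AddCommGroup H') (_ : Module R H'),
      Nonempty (TensorProduct R H H' ≃ₗ[R] R))
    (ι : F →ₗ[R] G) (π : G →ₗ[R] H)
    (hι : Function.Injective ι) (hπ : Function.Surjective π)
    (hexact : LinearMap.range ι = LinearMap.ker π)
    (hmemG : ∀ v : Fin 2 → G, ιMulti R 2 v ∈ ⋀[R]^2 G)
    (hmap : ∀ x ∈ ⋀[R]^2 F, ExteriorAlgebra.map ι x ∈ ⋀[R]^2 G) :
    Function.Injective ((ExteriorAlgebra.map ι).toLinearMap.restrict hmap) ∧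
    ∃ φ : (⋀[R]^2 G) →ₗ[R] TensorProduct R F H,
      Function.Surjective φ ∧
      LinearMap.range ((ExteriorAlgebra.map ι).toLinearMap.restrict hmap) =
        LinearMap.ker φ ∧
      ∀ g₁ g₂ : G,
        (TensorProduct.map ι LinearMap.id) (φ ⟨ιMulti R 2 ![g₁, g₂], hmemG ![g₁, g₂]⟩) =
          g₂ ⊗ₜ[R] π g₁ - g₁ ⊗ₜ[R] π g₂ :=
  stmt1_general hinv ι π hι hπ hexact hmemG hmap
end

section
/- The transition data of the Π-projective space Pⁿ_Π satisfies the cocycle condition: for the maps defined on chart overlaps by z_{ℓj} = z_{ℓi}/z_{ji} + θ_{ji}θ_{ℓi}/z_{ji}², θ_{ℓj} = θ_{ℓi}/z_{ji} − (z_{ℓi}/z_{ji}²)θ_{ji} (ℓ ≠ i, j) and z_{ij} = 1/z_{ji}, θ_{ij} = −θ_{ji}/z_{ji}², the composition of the change of coordinates from chart i to chart j followed by the change from chart j to chart k equals the change from chart i to chart k, as identities in the Grassmann algebra over the field of rational functions. -/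
set_option synthInstance.maxHeartbeats 1000000
set_option maxHeartbeats 1000000

open MvPolynomial

noncomputable section

variable (n : ℕ)

/-- The field of rational functions in the even chart coordinates. -/
abbrev F13 (n : ℕ) : Type := FractionRing (MvPolynomial (Fin (n + 1)) ℂ)

/-- The Grassmann algebra `ℂ(z₁,…,zₙ) ⊗ Λ[θ₁,…,θₙ]` (realised with one even and one odd
generator for each homogeneous index, the unused ones being harmless). -/
abbrev A13 (n : ℕ) : Type := ExteriorAlgebra (F13 n) (Fin (n + 1) → F13 n)

/-- inclusion of scalars (even elements) -/
noncomputable def c13 (f : F13 n) : A13 n := algebraMap (F13 n) (A13 n) f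

/-- The transition map to chart `j` of the Π-projective space `Pⁿ_Π`: given the
coordinates `(z_{ℓi}, θ_{ℓi})` of chart `i` (with the convention `z_{ii} = 1`,
`θ_{ii} = 0`), it produces the chart-`j` coordinates
`z_{ℓj} = z_{ℓi}/z_{ji} + θ_{ji}θ_{ℓi}/z_{ji}²`,
`θ_{ℓj} = θ_{ℓi}/z_{ji} − (z_{ℓi}/z_{ji}²)θ_{ji}`
(for `ℓ = i` these specialise to `z_{ij} = 1/z_{ji}`, `θ_{ij} = −θ_{ji}/z_{ji}²`). -/
noncomputable def tr13 (j : Fin (n + 1))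
    (v : (Fin (n + 1) → A13 n) × (Fin (n + 1) → A13 n)) :
    (Fin (n + 1) → A13 n) × (Fin (n + 1) → A13 n) :=
  (fun ℓ => v.1 ℓ * Ring.inverse (v.1 j) + v.2 j * v.2 ℓ * Ring.inverse (v.1 j ^ 2),
   fun ℓ => v.2 ℓ * Ring.inverse (v.1 j) - v.1 ℓ * v.2 j * Ring.inverse (v.1 j ^ 2))

/-- generic even coordinates of chart `i` (`z_{ℓi}`, with `z_{ii} = 1`) -/
noncomputable def zgen (i : Fin (n + 1)) : Fin (n + 1) → A13 n :=
  fun ℓ => if ℓ = i then 1 else c13 n (algebraMap (MvPolynomial (Fin (n + 1)) ℂ) (F13 n) (X ℓ))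

/-- generic odd coordinates of chart `i` (`θ_{ℓi}`, with `θ_{ii} = 0`) -/
noncomputable def θgen (i : Fin (n + 1)) : Fin (n + 1) → A13 n :=
  fun ℓ => if ℓ = i then 0 else ExteriorAlgebra.ι (F13 n) (Pi.single ℓ 1)

/-! In chart `i` the even coordinates are scalars, so the change to chart `j` only inverts
scalars. Its even coordinate `z_{kj} = z_k/z_j + θ_jθ_k/z_j²` is a nonzero scalar plus an element
of square zero, hence a unit with inverse `z_j/z_k − θ_jθ_k/z_k²`. Once these inverses are explicit,
both sides of the cocycle identity are polynomials in the three anticommuting generators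
`θ_j, θ_k, θ_ℓ`, and comparing coefficients leaves identities between rational functions of the
`z`'s. -/

namespace Ring

variable {F A : Type*} [Field F] [Ring A] [Algebra F A]

theorem inverse_algebraMap_add_of_mul_self_eq_zero {a : F} (ha : a ≠ 0) {N : A}
    (hN : N * N = 0) :
    Ring.inverse (algebraMap F A a + N) = algebraMap F A a⁻¹ - algebraMap F A (a⁻¹ ^ 2) * N := by
  refine Ring.inverse_unit ⟨_, _, ?_, ?_⟩ <;>
  · simp only [Algebra.algebraMap_eq_smul_one, add_mul, mul_add, sub_mul, mul_sub, smul_mul_assoc,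
      mul_smul_comm, one_mul, mul_one, hN, smul_zero]
    match_scalars <;> simp [ha, pow_two]

theorem inverse_algebraMap {a : F} (ha : a ≠ 0) :
    Ring.inverse (algebraMap F A a) = algebraMap F A a⁻¹ := by
  simpa using inverse_algebraMap_add_of_mul_self_eq_zero (A := A) ha (mul_zero 0)

end Ring

namespace ExteriorAlgebra

variable {R M : Type*} [CommRing R] [AddCommGroup M] [Module R M]

theorem ι_mul_ι_mul_self (m : M) (x : ExteriorAlgebra R M) : ι R m * (ι R m * x) = 0 := by
  rw [← mul_assoc, ι_sq_zero, zero_mul]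

theorem ι_mul_ι_swap (m n : M) : ι R n * ι R m = -(ι R m * ι R n) :=
  eq_neg_of_add_eq_zero_left (ι_add_mul_swap n m)

theorem ι_mul_ι_mul_swap (m n : M) (x : ExteriorAlgebra R M) :
    ι R n * (ι R m * x) = -(ι R m * (ι R n * x)) := by
  rw [← mul_assoc, ι_mul_ι_swap, neg_mul, mul_assoc]

end ExteriorAlgebra

def chartTransition {R κ : Type*} [Ring R] (j : κ) (v : (κ → R) × (κ → R)) :
    (κ → R) × (κ → R) :=
  (fun ℓ => v.1 ℓ * Ring.inverse (v.1 j) + v.2 j * v.2 ℓ * Ring.inverse (v.1 j ^ 2),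
   fun ℓ => v.2 ℓ * Ring.inverse (v.1 j) - v.1 ℓ * v.2 j * Ring.inverse (v.1 j ^ 2))

section Cocycle

open ExteriorAlgebra

variable {F M κ : Type*} [Field F] [AddCommGroup M] [Module F M]

theorem chartTransition_algebraMap_ι (f : κ → F) (e : κ → M) {j : κ} (hj : f j ≠ 0) :
    chartTransition j (fun ℓ => algebraMap F (ExteriorAlgebra F M) (f ℓ), fun ℓ => ι F (e ℓ)) =
      (fun ℓ => algebraMap F _ (f ℓ / f j) + algebraMap F _ (f j ^ 2)⁻¹ * (ι F (e j) * ι F (e ℓ)),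
       fun ℓ => ι F ((f j)⁻¹ • e ℓ - (f ℓ / f j ^ 2) • e j)) := by
  simp only [chartTransition, ← map_pow, Ring.inverse_algebraMap hj,
    Ring.inverse_algebraMap (pow_ne_zero 2 hj), map_sub, map_smul]
  ext ℓ <;> simp only [Algebra.algebraMap_eq_smul_one, mul_smul_comm, smul_mul_assoc, one_mul,
    mul_one, smul_smul, div_eq_mul_inv, mul_comm]

set_option linter.unusedSimpArgs false in
theorem chartTransition_cocycle (f : κ → F) (e : κ → M) {j k : κ} (hj : f j ≠ 0)
    (hk : f k ≠ 0) :
    chartTransition k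
        (chartTransition j (fun ℓ => algebraMap F (ExteriorAlgebra F M) (f ℓ), fun ℓ => ι F (e ℓ))) =
      chartTransition k (fun ℓ => algebraMap F _ (f ℓ), fun ℓ => ι F (e ℓ)) := by
  have hkj := ι_mul_ι_mul_swap (R := F) (e j) (e k)
  rw [chartTransition_algebraMap_ι f e hj, chartTransition_algebraMap_ι f e hk]
  simp only [chartTransition, ← Ring.inverse_pow]
  rw [Ring.inverse_algebraMap_add_of_mul_self_eq_zero (div_ne_zero hk hj) (by
    simp only [Algebra.algebraMap_eq_smul_one, smul_mul_assoc, mul_smul_comm, one_mul, mul_assoc,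
      hkj, ι_mul_ι_mul_self, mul_neg, neg_zero, smul_zero])]
  refine Prod.ext (funext fun ℓ => ?_) (funext fun ℓ => ?_) <;>
  · have hℓj := ι_mul_ι_mul_swap (R := F) (e j) (e ℓ)
    have hℓk := ι_mul_ι_mul_swap (R := F) (e k) (e ℓ)
    simp only [map_sub, map_smul, Algebra.algebraMap_eq_smul_one, pow_two, add_mul, mul_add,
      sub_mul, mul_sub, smul_mul_assoc, mul_smul_comm, smul_smul, one_mul, mul_one, mul_assoc,
      ι_sq_zero, ι_mul_ι_mul_self, ι_mul_ι_swap (e j) (e k), ι_mul_ι_swap (e j) (e ℓ),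
      ι_mul_ι_swap (e k) (e ℓ), hkj, hℓj, hℓk, mul_zero, smul_zero, mul_neg, smul_neg, neg_neg,
      neg_mul, sub_zero, add_zero, zero_add, neg_zero, sub_neg_eq_add]
    match_scalars <;> field_simp <;> ring

end Cocycle

theorem zgen_eq_algebraMap (n : ℕ) (i : Fin (n + 1)) :
    zgen n i = fun ℓ => algebraMap (F13 n) (A13 n)
      (if ℓ = i then 1 else algebraMap (MvPolynomial (Fin (n + 1)) ℂ) (F13 n) (X ℓ)) := by
  funext ℓ
  unfold zgen c13
  split_ifs <;> simp

theorem θgen_eq_ι (n : ℕ) (i : Fin (n + 1)) :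
    θgen n i = fun ℓ => ExteriorAlgebra.ι (F13 n) (if ℓ = i then 0 else Pi.single ℓ 1) := by
  funext ℓ
  unfold θgen
  split_ifs <;> simp

/-- The transition data of the Π-projective space `Pⁿ_Π` satisfies the
cocycle condition: the change of coordinates from chart `i` to chart `j` followed by the
change from chart `j` to chart `k` equals the change from chart `i` to chart `k`, as
identities in the Grassmann algebra over the field of rational functions. -/
theorem stmt13 (n : ℕ) (i j k : Fin (n + 1)) :
    tr13 n k (tr13 n j (zgen n i, θgen n i)) = tr13 n k (zgen n i, θgen n i) := by
  have hz : ∀ ℓ, (if ℓ = i then 1 else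
      algebraMap (MvPolynomial (Fin (n + 1)) ℂ) (F13 n) (X ℓ)) ≠ 0 := fun ℓ => by
    split_ifs
    · exact one_ne_zero
    · exact IsFractionRing.to_map_ne_zero_of_mem_nonZeroDivisors
        (mem_nonZeroDivisors_of_ne_zero (X_ne_zero ℓ))
  rw [zgen_eq_algebraMap, θgen_eq_ι]
  exact chartTransition_cocycle _ _ (hz j) (hz k)
end
end

section
/- Let A, B, C, D be the blocks (over a commutative ring containing the even part of a Grassmann algebra) given by: A lower-triangular n×n with A₁₁ = −1/z², A_{kk} = 1/z for k ≥ 2, A_{k1} = −w_k/z² − 2t₁t_k/z³ for k ≥ 2, and D lower-triangular with D₁₁ = −1/z², D_{kk} = 1/z for k ≥ 2, D_{k1} = −w_k/z² for k ≥ 2, with B, C odd matrices as in the super Jacobian of Pⁿ_Π on U₀ ∩ U₁ (B₁ⱼ = 0, B_{k1} = t_k/z², B_{kk} = −t₁/z² for k ≥ 2; C₁₁ = 2t₁/z³, C_{k1} = −t_k/z² + 2w_k t₁/z³, C_{kk} = −t₁/z² for k ≥ 2, all other entries zero). Then det(A)·det(D − C A⁻¹ B)⁻¹ = 1, i.e.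 the Berezinian of the block supermatrix (A B; C D) equals 1. -/
set_option synthInstance.maxHeartbeats 1000000
set_option maxHeartbeats 1000000

open MvPolynomial

noncomputable section

variable (n : ℕ)

/-- The field `ℂ(z, w₂, …, w_n)` (variable `0` is `z`, variable `k ≥ 1` is `w_{k+1}`). -/
abbrev F14 (n : ℕ) : Type := FractionRing (MvPolynomial (Fin (n + 1)) ℂ)

/-- The Grassmann algebra over `ℂ(z, w₂,…,w_n)` with odd generators `t₁,…,t_n`. -/
abbrev A14 (n : ℕ) : Type := ExteriorAlgebra (F14 n) (Fin (n + 1) → F14 n)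

noncomputable def c14 (f : F14 n) : A14 n := algebraMap (F14 n) (A14 n) f
noncomputable def z14 : F14 n := algebraMap (MvPolynomial (Fin (n + 1)) ℂ) (F14 n) (X 0)
noncomputable def w14 (k : Fin (n + 1)) : F14 n := algebraMap (MvPolynomial (Fin (n + 1)) ℂ) (F14 n) (X k)
noncomputable def t14 (k : Fin (n + 1)) : A14 n := ExteriorAlgebra.ι (F14 n) (Pi.single k 1)

/-- Determinant of a square matrix over a (possibly noncommutative) ring, via the Leibniz
formula with products taken in the natural order of the index set.  For matrices whose
entries pairwise commute (such as matrices with entries in the even part of a Grassmann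
algebra) this is the usual determinant. -/
noncomputable def ndet {m : ℕ} {R : Type*} [Ring R] (M : Matrix (Fin m) (Fin m) R) : R :=
  ∑ σ : Equiv.Perm (Fin m),
    ((Equiv.Perm.sign σ : ℤ)) • (((List.finRange m).map fun i => M (σ i) i).prod)

/-- the block `A` of the super Jacobian of `Pⁿ_Π` on `U₀ ∩ U₁` (index `0 ↔ 1`) -/
noncomputable def blockA : Matrix (Fin (n + 1)) (Fin (n + 1)) (A14 n) := fun k l =>
  if l = 0 then
    (if k = 0 then c14 n (-(z14 n)⁻¹ ^ 2)
     else c14 n (-(w14 n k) * (z14 n)⁻¹ ^ 2) - c14 n (2 * (z14 n)⁻¹ ^ 3) * (t14 n 0 * t14 n k))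
  else if k = l then c14 n (z14 n)⁻¹ else 0

/-- the (odd) block `B` -/
noncomputable def blockB : Matrix (Fin (n + 1)) (Fin (n + 1)) (A14 n) := fun k l =>
  if k = 0 then 0
  else if l = 0 then c14 n ((z14 n)⁻¹ ^ 2) * t14 n k
  else if k = l then -(c14 n ((z14 n)⁻¹ ^ 2) * t14 n 0) else 0

/-- the (odd) block `C` -/
noncomputable def blockC : Matrix (Fin (n + 1)) (Fin (n + 1)) (A14 n) := fun k l =>
  if l = 0 then
    (if k = 0 then c14 n (2 * (z14 n)⁻¹ ^ 3) * t14 n 0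
     else -(c14 n ((z14 n)⁻¹ ^ 2) * t14 n k) + c14 n (2 * (w14 n k) * (z14 n)⁻¹ ^ 3) * t14 n 0)
  else if k = l then -(c14 n ((z14 n)⁻¹ ^ 2) * t14 n 0) else 0

/-- the block `D` -/
noncomputable def blockD : Matrix (Fin (n + 1)) (Fin (n + 1)) (A14 n) := fun k l =>
  if l = 0 then
    (if k = 0 then c14 n (-(z14 n)⁻¹ ^ 2) else c14 n (-(w14 n k) * (z14 n)⁻¹ ^ 2))
  else if k = l then c14 n (z14 n)⁻¹ else 0

/-! All four blocks are lower triangular, being supported on the first column and the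
diagonal. The columns of `A` other than the first are `z⁻¹ eₗ` and the first row of `B`
vanishes, so `A B = z⁻¹ B`, hence `A⁻¹ B = z B` and the Schur complement is `D - z C B`.
The diagonal entries of `C B` are the products `Cₖₖ Bₖₖ` of two multiples of `t₁`, hence
vanish because `t₁² = 0`. So `D - C A⁻¹ B` is lower triangular with the diagonal of `D`, which
is that of `A`, and both determinants are the same product of units. -/

lemma Equiv.Perm.eq_one_of_forall_le {α : Type*} [Fintype α] [LinearOrder α]
    {σ : Equiv.Perm α} (h : ∀ i, i ≤ σ i) : σ = 1 := by
  by_contra hσ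
  have hne : σ.support.Nonempty :=
    Finset.nonempty_iff_ne_empty.mpr (mt Equiv.Perm.support_eq_empty_iff.mp hσ)
  set i := σ.support.max' hne
  have hi : σ i ≠ i := Equiv.Perm.mem_support.mp (σ.support.max'_mem hne)
  have hlt : i < σ i := (h i).lt_of_ne hi.symm
  have hfix : σ (σ i) = σ i := by
    by_contra hmoved
    exact (σ.support.le_max' _ (Equiv.Perm.mem_support.mpr hmoved)).not_gt hlt
  exact hi (σ.injective hfix)

lemma ndet_of_isLowerTriangular {m : ℕ} {R : Type*} [Ring R] {M : Matrix (Fin m) (Fin m) R}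
    (hM : M.IsLowerTriangular) : ndet M = ((List.finRange m).map fun i => M i i).prod := by
  rw [ndet, Finset.sum_eq_single 1 _ (by simp)]
  · simp
  intro σ _ hσ
  obtain ⟨i, hi⟩ : ∃ i, σ i < i := by
    by_contra! h
    exact hσ (Equiv.Perm.eq_one_of_forall_le h)
  have hzero : (0 : R) ∈ (List.finRange m).map fun j => M (σ j) j :=
    List.mem_map.mpr ⟨i, List.mem_finRange i, hM hi⟩
  rw [List.prod_eq_zero hzero, smul_zero]

lemma Matrix.IsLowerTriangular.mul_apply_self {m R : Type*} [Fintype m] [LinearOrder m]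
    [NonUnitalNonAssocSemiring R] {M N : Matrix m m R} (hM : M.IsLowerTriangular)
    (hN : N.IsLowerTriangular) (i : m) : (M * N) i i = M i i * N i i := by
  rw [Matrix.mul_apply, Finset.sum_eq_single i _ (by simp)]
  intro p _ hp
  rcases hp.lt_or_gt with hlt | hgt
  · rw [hN hlt, mul_zero]
  · rw [hM hgt, zero_mul]

lemma isLowerTriangular_of_eq_zero_off_col_zero_diag {m : ℕ} {R : Type*} [Zero R]
    {M : Matrix (Fin (m + 1)) (Fin (m + 1)) R} (h : ∀ k l, l ≠ 0 → k ≠ l → M k l = 0) :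
    M.IsLowerTriangular := by
  intro k l (hkl : k < l)
  exact h k l (ne_bot_of_gt hkl) hkl.ne

lemma z14_ne_zero : z14 n ≠ 0 := by
  rw [z14, Ne, IsFractionRing.to_map_eq_zero_iff]
  exact X_ne_zero 0

lemma blockA_isLowerTriangular : (blockA n).IsLowerTriangular :=
  isLowerTriangular_of_eq_zero_off_col_zero_diag fun k l hl hkl => by simp [blockA, hl, hkl]

lemma blockB_isLowerTriangular : (blockB n).IsLowerTriangular :=
  isLowerTriangular_of_eq_zero_off_col_zero_diag fun k l hl hkl => by simp [blockB, hl, hkl]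

lemma blockC_isLowerTriangular : (blockC n).IsLowerTriangular :=
  isLowerTriangular_of_eq_zero_off_col_zero_diag fun k l hl hkl => by simp [blockC, hl, hkl]

lemma blockD_isLowerTriangular : (blockD n).IsLowerTriangular :=
  isLowerTriangular_of_eq_zero_off_col_zero_diag fun k l hl hkl => by simp [blockD, hl, hkl]

lemma blockD_apply_self_eq_blockA_apply_self (k : Fin (n + 1)) :
    blockD n k k = blockA n k k := by
  by_cases hk : k = 0 <;> simp [blockA, blockD, hk]

lemma isUnit_blockA_apply_self (k : Fin (n + 1)) : IsUnit (blockA n k k) := by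
  have hz := z14_ne_zero n
  by_cases hk : k = 0
  · simpa [blockA, hk, c14] using (IsUnit.mk0 _ hz).map (algebraMap (F14 n) (A14 n))
  · simpa [blockA, hk, c14] using (IsUnit.mk0 _ (inv_ne_zero hz)).map (algebraMap (F14 n) (A14 n))

lemma blockA_mul_blockB : blockA n * blockB n = (z14 n)⁻¹ • blockB n := by
  ext k l
  rw [Matrix.mul_apply, Finset.sum_eq_single k _ (by simp)]
  · by_cases hk : k = 0
    · simp [blockB, hk]
    · simp [blockA, hk, c14, Algebra.smul_def]
  intro p _ hpk
  by_cases hp : p = 0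
  · simp [blockB, hp]
  · simp [blockA, hp, Ne.symm hpk]

lemma blockC_mul_blockB_apply_self (k : Fin (n + 1)) : (blockC n * blockB n) k k = 0 := by
  rw [(blockC_isLowerTriangular n).mul_apply_self (blockB_isLowerTriangular n)]
  by_cases hk : k = 0
  · simp [blockB, hk]
  · simp only [blockC, blockB, hk, if_false, if_true, neg_mul_neg, c14, ← Algebra.smul_def,
      smul_mul_smul_comm, t14, ExteriorAlgebra.ι_sq_zero, smul_zero]

theorem stmt14_general (n : ℕ) (Ainv : Matrix (Fin (n + 1)) (Fin (n + 1)) (A14 n))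
    (h₂ : Ainv * blockA n = 1) :
    ndet (blockA n) *
      Ring.inverse (ndet (blockD n - blockC n * Ainv * blockB n)) = 1 := by
  have hAinvB : Ainv * blockB n = z14 n • blockB n := by
    calc Ainv * blockB n = z14 n • (Ainv * (blockA n * blockB n)) := by
          rw [blockA_mul_blockB, Matrix.mul_smul, smul_smul, mul_inv_cancel₀ (z14_ne_zero n),
            one_smul]
      _ = z14 n • blockB n := by rw [← mul_assoc, h₂, one_mul]
  have hSchur : blockD n - blockC n * Ainv * blockB n
      = blockD n - z14 n • (blockC n * blockB n) := by
    rw [mul_assoc, hAinvB, Matrix.mul_smul]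
  have hCB := (blockC_isLowerTriangular n).mul (blockB_isLowerTriangular n)
  have hS : (blockD n - z14 n • (blockC n * blockB n)).IsLowerTriangular :=
    (blockD_isLowerTriangular n).sub (fun k l hkl => by simp [hCB hkl])
  rw [hSchur, ndet_of_isLowerTriangular (blockA_isLowerTriangular n),
    ndet_of_isLowerTriangular hS]
  simp only [Matrix.sub_apply, Matrix.smul_apply, blockC_mul_blockB_apply_self, smul_zero,
    sub_zero, blockD_apply_self_eq_blockA_apply_self]
  exact Ring.mul_inverse_cancel _ (List.prod_isUnit fun x hx => by
    obtain ⟨k, -, rfl⟩ := List.mem_map.mp hx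
    exact isUnit_blockA_apply_self n k)

/-- With `A, B, C, D` the blocks of the super Jacobian of `Pⁿ_Π` on
`U₀ ∩ U₁` as above, one has `det(A)·det(D − C A⁻¹ B)⁻¹ = 1`, i.e. the Berezinian of the
block supermatrix `(A B; C D)` equals `1`. -/
theorem stmt14 (n : ℕ) (Ainv : Matrix (Fin (n + 1)) (Fin (n + 1)) (A14 n))
    (h₁ : blockA n * Ainv = 1) (h₂ : Ainv * blockA n = 1) :
    ndet (blockA n) *
      Ring.inverse (ndet (blockD n - blockC n * Ainv * blockB n)) = 1 :=
  stmt14_general n Ainv h₂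
end
end

section
/- In the Grassmann algebra over ℂ(x₁₁, y₁₁, x₂₁, y₂₁) with odd generators θ₁₁, θ₂₁, ξ₁₁, ξ₂₁, define the transition maps of G_Π(2,4) on U₁ ∩ U₂ by: x₁₂ = −x₁₁/y₁₁ − θ₁₁ξ₁₁/y₁₁², y₁₂ = 1/y₁₁, x₂₂ = x₂₁ − x₁₁y₂₁/y₁₁ + θ₁₁ξ₂₁/y₁₁ − (x₁₁/y₁₁²)ξ₁₁ξ₂₁ − (y₂₁/y₁₁²)θ₁₁ξ₁₁, y₂₂ = y₂₁/y₁₁ + ξ₁₁ξ₂₁/y₁₁², θ₁₂ = −θ₁₁/y₁₁ + (x₁₁/y₁₁²)ξ₁₁, ξ₁₂ = −ξ₁₁/y₁₁², θ₂₂ = θ₂₁ − (y₂₁/y₁₁)θ₁₁ − (x₁₁/y₁₁)ξ₂₁ + (x₁₁y₂₁/y₁₁²)ξ₁₁ − θ₁₁ξ₁₁ξ₂₁/y₁₁², ξ₂₂ = ξ₂₁/y₁₁ − (y₂₁/y₁₁²)ξ₁₁. Then these formulas are obtained from row reduction: the 4×8 supermatrix Z_{U₁} with rows (1,0,x₁₁,x₂₁|0,0,θ₁₁,θ₂₁),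 (0,1,y₁₁,y₂₁|0,0,ξ₁₁,ξ₂₁), (0,0,−θ₁₁,−θ₂₁|1,0,x₁₁,x₂₁), (0,0,−ξ₁₁,−ξ₂₁|0,1,y₁₁,y₂₁), when left-multiplied by the inverse of its 4×4 submatrix formed by columns 1,3,5,7, yields the supermatrix Z_{U₂} with rows (1,x₁₂,0,x₂₂|0,θ₁₂,0,θ₂₂), (0,y₁₂,1,y₂₂|0,ξ₁₂,0,ξ₂₂), (0,−θ₁₂,0,−θ₂₂|1,x₁₂,0,x₂₂), (0,−ξ₁₂,0,−ξ₂₂|0,y₁₂,1,y₂₂). -/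
set_option synthInstance.maxHeartbeats 1000000
set_option maxHeartbeats 1000000

open MvPolynomial

noncomputable section

/-- The field `ℂ(x₁₁, y₁₁, x₂₁, y₂₁)`. -/
abbrev F17 : Type := FractionRing (MvPolynomial (Fin 4) ℂ)

/-- The Grassmann algebra `ℂ(x₁₁,y₁₁,x₂₁,y₂₁) ⊗ Λ[θ₁₁,θ₂₁,ξ₁₁,ξ₂₁]`. -/
abbrev A17 : Type := ExteriorAlgebra F17 (Fin 4 → F17)

noncomputable def c17 (f : F17) : A17 := algebraMap F17 A17 f
noncomputable def xv : F17 := algebraMap (MvPolynomial (Fin 4) ℂ) F17 (X 0)  -- x₁₁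
noncomputable def yv : F17 := algebraMap (MvPolynomial (Fin 4) ℂ) F17 (X 1)  -- y₁₁
noncomputable def xv' : F17 := algebraMap (MvPolynomial (Fin 4) ℂ) F17 (X 2) -- x₂₁
noncomputable def yv' : F17 := algebraMap (MvPolynomial (Fin 4) ℂ) F17 (X 3) -- y₂₁
noncomputable def th1 : A17 := ExteriorAlgebra.ι F17 (Pi.single (0 : Fin 4) 1)  -- θ₁₁
noncomputable def th2 : A17 := ExteriorAlgebra.ι F17 (Pi.single (1 : Fin 4) 1)  -- θ₂₁
noncomputable def xi1 : A17 := ExteriorAlgebra.ι F17 (Pi.single (2 : Fin 4) 1)  -- ξ₁₁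
noncomputable def xi2 : A17 := ExteriorAlgebra.ι F17 (Pi.single (3 : Fin 4) 1)  -- ξ₂₁

/-- the super big cell `Z_{U₁}` of `G_Π(2,4)` -/
noncomputable def ZU1 : Matrix (Fin 4) (Fin 8) A17 :=
  !![1, 0, c17 xv, c17 xv', 0, 0, th1, th2;
     0, 1, c17 yv, c17 yv', 0, 0, xi1, xi2;
     0, 0, -th1, -th2, 1, 0, c17 xv, c17 xv';
     0, 0, -xi1, -xi2, 0, 1, c17 yv, c17 yv']

/-- the 4×4 submatrix of `Z_{U₁}` formed by columns 1,3,5,7 -/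
noncomputable def M17 : Matrix (Fin 4) (Fin 4) A17 :=
  !![1, c17 xv, 0, th1;
     0, c17 yv, 0, xi1;
     0, -th1, 1, c17 xv;
     0, -xi1, 0, c17 yv]

-- the transition functions of `G_Π(2,4)` on `U₁ ∩ U₂`
noncomputable def x12' : A17 := c17 (-(xv / yv)) - c17 (yv⁻¹ ^ 2) * (th1 * xi1)
noncomputable def y12' : A17 := c17 yv⁻¹
noncomputable def x22' : A17 :=
  c17 (xv' - xv * yv' / yv) + c17 yv⁻¹ * (th1 * xi2)
    - c17 (xv * yv⁻¹ ^ 2) * (xi1 * xi2) - c17 (yv' * yv⁻¹ ^ 2) * (th1 * xi1)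
noncomputable def y22' : A17 := c17 (yv' / yv) + c17 (yv⁻¹ ^ 2) * (xi1 * xi2)
noncomputable def θ12' : A17 := -(c17 yv⁻¹ * th1) + c17 (xv * yv⁻¹ ^ 2) * xi1
noncomputable def ξ12' : A17 := -(c17 (yv⁻¹ ^ 2) * xi1)
noncomputable def θ22' : A17 :=
  th2 - c17 (yv' / yv) * th1 - c17 (xv / yv) * xi2 + c17 (xv * yv' * yv⁻¹ ^ 2) * xi1
    - c17 (yv⁻¹ ^ 2) * (th1 * xi1 * xi2)
noncomputable def ξ22' : A17 := c17 yv⁻¹ * xi2 - c17 (yv' * yv⁻¹ ^ 2) * xi1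

/-- the super big cell `Z_{U₂}` of `G_Π(2,4)`, with entries given by the transition
functions above -/
noncomputable def ZU2 : Matrix (Fin 4) (Fin 8) A17 :=
  !![1, x12', 0, x22', 0, θ12', 0, θ22';
     0, y12', 1, y22', 0, ξ12', 0, ξ22';
     0, -θ12', 0, -θ22', 1, x12', 0, x22';
     0, -ξ12', 0, -ξ22', 0, y12', 1, y22']


/-!
Row reduction of `Z_{U₁}` by its pivot block `M` is the statement `M * Z_{U₂} = Z_{U₁}`, which is a
direct entrywise computation. It holds in any algebra over a field in which `y₁₁` is invertible and
`ξ₁₁² = 0`: the odd entries `θ₁₁, ξ₁₁` of `M` only ever multiply entries of `Z_{U₂}` built from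
`ξ₁₁, ξ₂₁`, so no anticommutation relation is needed.
-/

namespace SuperBigCell

variable {K A : Type*} [Field K] [Ring A] [Algebra K A]
variable (θ₁ θ₂ ξ₁ ξ₂ : A) (x₁ y₁ x₂ y₂ : K)

local notation "c" => algebraMap K A

def bigCellU₁ : Matrix (Fin 4) (Fin 8) A :=
  !![1, 0, c x₁, c x₂, 0, 0, θ₁, θ₂;
     0, 1, c y₁, c y₂, 0, 0, ξ₁, ξ₂;
     0, 0, -θ₁, -θ₂, 1, 0, c x₁, c x₂;
     0, 0, -ξ₁, -ξ₂, 0, 1, c y₁, c y₂]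

def pivotBlock : Matrix (Fin 4) (Fin 4) A :=
  !![1, c x₁, 0, θ₁;
     0, c y₁, 0, ξ₁;
     0, -θ₁, 1, c x₁;
     0, -ξ₁, 0, c y₁]

def x₁₂ : A := c (-(x₁ / y₁)) - c (y₁⁻¹ ^ 2) * (θ₁ * ξ₁)
def y₁₂ : A := c y₁⁻¹
def x₂₂ : A :=
  c (x₂ - x₁ * y₂ / y₁) + c y₁⁻¹ * (θ₁ * ξ₂)
    - c (x₁ * y₁⁻¹ ^ 2) * (ξ₁ * ξ₂) - c (y₂ * y₁⁻¹ ^ 2) * (θ₁ * ξ₁)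
def y₂₂ : A := c (y₂ / y₁) + c (y₁⁻¹ ^ 2) * (ξ₁ * ξ₂)
def θ₁₂ : A := -(c y₁⁻¹ * θ₁) + c (x₁ * y₁⁻¹ ^ 2) * ξ₁
def ξ₁₂ : A := -(c (y₁⁻¹ ^ 2) * ξ₁)
def θ₂₂ : A :=
  θ₂ - c (y₂ / y₁) * θ₁ - c (x₁ / y₁) * ξ₂ + c (x₁ * y₂ * y₁⁻¹ ^ 2) * ξ₁
    - c (y₁⁻¹ ^ 2) * (θ₁ * ξ₁ * ξ₂)
def ξ₂₂ : A := c y₁⁻¹ * ξ₂ - c (y₂ * y₁⁻¹ ^ 2) * ξ₁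

def bigCellU₂ : Matrix (Fin 4) (Fin 8) A :=
  let x₁₂ := x₁₂ θ₁ ξ₁ x₁ y₁
  let y₁₂ := y₁₂ (A := A) y₁
  let x₂₂ := x₂₂ θ₁ ξ₁ ξ₂ x₁ y₁ x₂ y₂
  let y₂₂ := y₂₂ ξ₁ ξ₂ y₁ y₂
  let θ₁₂ := θ₁₂ θ₁ ξ₁ x₁ y₁
  let ξ₁₂ := ξ₁₂ ξ₁ y₁
  let θ₂₂ := θ₂₂ θ₁ θ₂ ξ₁ ξ₂ x₁ y₁ y₂
  let ξ₂₂ := ξ₂₂ ξ₁ ξ₂ y₁ y₂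
  !![1, x₁₂, 0, x₂₂, 0, θ₁₂, 0, θ₂₂;
     0, y₁₂, 1, y₂₂, 0, ξ₁₂, 0, ξ₂₂;
     0, -θ₁₂, 0, -θ₂₂, 1, x₁₂, 0, x₂₂;
     0, -ξ₁₂, 0, -ξ₂₂, 0, y₁₂, 1, y₂₂]

theorem pivotBlock_mul_bigCellU₂ (hy : y₁ ≠ 0) (hξ : ξ₁ * ξ₁ = 0) :
    pivotBlock θ₁ ξ₁ x₁ y₁ * bigCellU₂ θ₁ θ₂ ξ₁ ξ₂ x₁ y₁ x₂ y₂ =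
      bigCellU₁ θ₁ θ₂ ξ₁ ξ₂ x₁ y₁ x₂ y₂ := by
  have hξ' (z : A) : ξ₁ * (ξ₁ * z) = 0 := by rw [← mul_assoc, hξ, zero_mul]
  ext i j
  fin_cases i <;> fin_cases j <;>
    simp only [pivotBlock, bigCellU₁, bigCellU₂, x₁₂, y₁₂, x₂₂, y₂₂, θ₁₂, ξ₁₂, θ₂₂, ξ₂₂,
      Matrix.mul_apply, Fin.sum_univ_four, Matrix.of_apply, Matrix.cons_val', Matrix.cons_val,
      Matrix.cons_val_zero, Matrix.cons_val_one, Matrix.cons_val_fin_one, Fin.isValue,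
      Fin.zero_eta, Fin.mk_one, Fin.reduceFinMk, Algebra.algebraMap_eq_smul_one, mul_add,
      mul_sub, mul_neg, neg_mul, mul_zero, zero_mul, mul_one, one_mul, Algebra.smul_mul_assoc,
      Algebra.mul_smul_comm, mul_assoc, hξ, hξ', smul_zero] <;>
    match_scalars <;> field_simp <;> ring

end SuperBigCell

lemma yv_ne_zero : yv ≠ 0 :=
  (map_ne_zero_iff _ (IsFractionRing.injective (MvPolynomial (Fin 4) ℂ) F17)).mpr (X_ne_zero 1)

lemma M17_mul_ZU2 : M17 * ZU2 = ZU1 :=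
  SuperBigCell.pivotBlock_mul_bigCellU₂ th1 th2 xi1 xi2 xv yv xv' yv' yv_ne_zero
    (ExteriorAlgebra.ι_sq_zero _)

theorem stmt17_general (Minv : Matrix (Fin 4) (Fin 4) A17)
    (h₂ : Minv * M17 = 1) :
    Minv * ZU1 = ZU2 := by
  rw [← M17_mul_ZU2, ← Matrix.mul_assoc, h₂, Matrix.one_mul]

/-- The transition formulas of `G_Π(2,4)` on `U₁ ∩ U₂` are obtained from
row reduction: left-multiplying the super big cell `Z_{U₁}` by the inverse of its 4×4
submatrix formed by columns 1,3,5,7 yields the super big cell `Z_{U₂}`. -/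
theorem stmt17 (Minv : Matrix (Fin 4) (Fin 4) A17)
    (h₁ : M17 * Minv = 1) (h₂ : Minv * M17 = 1) :
    Minv * ZU1 = ZU2 :=
  stmt17_general Minv h₂
end
end
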